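/- arXiv:1105.5519 — 4 statements merged into one kernel-verified Lean document; each statement's English description precedes it below -/
import Mathlib

section
/- Let n ≥ 1, let a > 0, let D_a ⊂ ℝ^n be the open ball of radius a centered at the origin, and let f : D_a → ℝ be a smooth function whose Hessian is positive definite at every point of D_a and whose gradient blows up at the boundary, i.e. ‖∇f(x)‖ → ∞ as ‖x‖ → a. Then the map Φ : D_a × ℝ^n → ℝ^n × ℝ^n defined by Φ(x,y) = (∇f(x), y) is a smooth diffeomorphism of D_a × ℝ^n onto all of ℝ^n × ℝ^n ≃ ℝ^{2n}. -/
open Metric Set Filter RealInnerProductSpace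
open scoped Topology

/-- If `f` is smooth on the open ball `D_a ⊆ ℝⁿ` with everywhere positive
definite Hessian and gradient blowing up at the boundary, then
`Φ (x, y) = (∇f x, y)` is a smooth diffeomorphism from `D_a × ℝⁿ` onto all of `ℝⁿ × ℝⁿ`. -/
theorem calabi_global_darboux
    (n : ℕ) (hn : 1 ≤ n) (a : ℝ) (ha : 0 < a)
    (f : EuclideanSpace ℝ (Fin n) → ℝ)
    (hf : ContDiffOn ℝ (⊤ : ℕ∞) f (ball (0 : EuclideanSpace ℝ (Fin n)) a))
    (hpos : ∀ x ∈ ball (0 : EuclideanSpace ℝ (Fin n)) a,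
      ∀ v : EuclideanSpace ℝ (Fin n), v ≠ 0 →
        0 < ⟪fderiv ℝ (gradient f) x v, v⟫)
    (hblow : ∀ x : ℕ → EuclideanSpace ℝ (Fin n),
      (∀ k, x k ∈ ball (0 : EuclideanSpace ℝ (Fin n)) a) →
      Tendsto (fun k => ‖x k‖) atTop (𝓝 a) →
      Tendsto (fun k => ‖gradient f (x k)‖) atTop atTop) :
    ∃ Ψ : EuclideanSpace ℝ (Fin n) × EuclideanSpace ℝ (Fin n) →
        EuclideanSpace ℝ (Fin n) × EuclideanSpace ℝ (Fin n),
      ContDiffOn ℝ (⊤ : ℕ∞) (fun p : EuclideanSpace ℝ (Fin n) × EuclideanSpace ℝ (Fin n) =>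
          (gradient f p.1, p.2))
        (ball (0 : EuclideanSpace ℝ (Fin n)) a ×ˢ (univ : Set (EuclideanSpace ℝ (Fin n)))) ∧
      ContDiff ℝ (⊤ : ℕ∞) Ψ ∧
      (∀ p ∈ ball (0 : EuclideanSpace ℝ (Fin n)) a ×ˢ (univ : Set (EuclideanSpace ℝ (Fin n))),
        Ψ (gradient f p.1, p.2) = p) ∧
      (∀ q : EuclideanSpace ℝ (Fin n) × EuclideanSpace ℝ (Fin n),
        Ψ q ∈ ball (0 : EuclideanSpace ℝ (Fin n)) a ×ˢ (univ : Set (EuclideanSpace ℝ (Fin n))) ∧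
        (gradient f (Ψ q).1, (Ψ q).2) = q) := by
  classical
  set B : Set (EuclideanSpace ℝ (Fin n)) := ball 0 a with hBdef
  have hBo : IsOpen B := isOpen_ball
  set g : EuclideanSpace ℝ (Fin n) → EuclideanSpace ℝ (Fin n) := gradient f with hgdef
  -- Step 1 : smoothness of g on B
  have hgs : ContDiffOn ℝ (⊤ : ℕ∞) g B := by
    have h1 : ContDiffOn ℝ (⊤ : ℕ∞) (fun x => fderiv ℝ f x) B :=
      hf.fderiv_of_isOpen (m := (⊤ : ℕ∞)) hBo (by simp)
    have h2 : g = fun x => (InnerProductSpace.toDual ℝ (EuclideanSpace ℝ (Fin n))).symm (fderiv ℝ f x) := rfl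
    rw [h2]
    exact ((InnerProductSpace.toDual ℝ (EuclideanSpace ℝ (Fin n))).symm.toContinuousLinearEquiv.contDiff).comp_contDiffOn h1
  have hgd : ∀ x ∈ B, DifferentiableAt ℝ g x := fun x hx =>
    (hgs.differentiableOn (by simp)).differentiableAt (hBo.mem_nhds hx)
  -- Step 2 : strict monotonicity / injectivity
  have key : ∀ x ∈ B, ∀ y ∈ B, x ≠ y → 0 < ⟪g x - g y, x - y⟫ := by
    intro x hx y hy hxy
    set v : EuclideanSpace ℝ (Fin n) := x - y with hvdef
    have hv : v ≠ 0 := sub_ne_zero.mpr hxy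
    set c : ℝ → EuclideanSpace ℝ (Fin n) := fun t => y + t • v with hcdef
    have hcB : ∀ t ∈ Icc (0:ℝ) 1, c t ∈ B := by
      intro t ht
      have : c t = (1 - t) • y + t • x := by simp only [hcdef, hvdef]; module
      rw [this]
      exact (convex_ball (0:EuclideanSpace ℝ (Fin n)) a) hy hx (by linarith [ht.2]) ht.1 (by ring)
    set φ : ℝ → ℝ := fun t => ⟪g (c t) - g y, v⟫ with hφdef
    have hder : ∀ t ∈ Icc (0:ℝ) 1, HasDerivAt φ ⟪fderiv ℝ g (c t) v, v⟫ t := by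
      intro t ht
      have hc : HasDerivAt c v t := by
        have h0 : HasDerivAt (fun t : ℝ => t • v) ((1:ℝ) • v) t := (hasDerivAt_id t).smul_const v
        rw [one_smul] at h0
        exact h0.const_add y
      have hg' : HasFDerivAt g (fderiv ℝ g (c t)) (c t) := (hgd _ (hcB t ht)).hasFDerivAt
      have hcomp : HasDerivAt (fun t => g (c t)) (fderiv ℝ g (c t) v) t :=
        hg'.comp_hasDerivAt t hc
      have hsub : HasDerivAt (fun t => g (c t) - g y) (fderiv ℝ g (c t) v) t :=
        hcomp.sub_const _
      simpa using hsub.inner ℝ (hasDerivAt_const t v)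
    have hcont : ContinuousOn φ (Icc 0 1) := fun t ht =>
      (hder t ht).continuousAt.continuousWithinAt
    obtain ⟨t₀, ht₀, heq⟩ := exists_hasDerivAt_eq_slope φ
      (fun t => ⟪fderiv ℝ g (c t) v, v⟫) one_pos hcont
      (fun t ht => hder t (Ioo_subset_Icc_self ht))
    have hpos' : 0 < ⟪fderiv ℝ g (c t₀) v, v⟫ :=
      hpos _ (hcB t₀ (Ioo_subset_Icc_self ht₀)) v hv
    have hφ0 : φ 0 = 0 := by simp [hφdef, hcdef]
    have hφ1 : φ 1 = ⟪g x - g y, x - y⟫ := by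
      have : c 1 = x := by simp [hcdef, hvdef]
      simp [hφdef, this, hvdef]
    rw [heq] at hpos'
    rw [hφ0, hφ1] at hpos'
    simpa using hpos'
  have hinj : InjOn g B := by
    intro x hx y hy hgxy
    by_contra hne
    have := key x hx y hy hne
    rw [hgxy, sub_self] at this
    simp at this
  -- Step 3 : invertible derivative at each point, as a continuous linear equiv
  have hA : ∀ x ∈ B, ∃ A : EuclideanSpace ℝ (Fin n) ≃L[ℝ] EuclideanSpace ℝ (Fin n), (A : EuclideanSpace ℝ (Fin n) →L[ℝ] EuclideanSpace ℝ (Fin n)) = fderiv ℝ g x := by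
    intro x hx
    have hinj' : Function.Injective (fderiv ℝ g x) := by
      intro v w hvw
      by_contra hne
      have hv : v - w ≠ 0 := sub_ne_zero.mpr hne
      have := hpos x hx (v - w) hv
      rw [map_sub, hvw, sub_self] at this
      simp at this
    have hsurj' : Function.Surjective ((fderiv ℝ g x) : EuclideanSpace ℝ (Fin n) →ₗ[ℝ] EuclideanSpace ℝ (Fin n)) :=
      LinearMap.injective_iff_surjective.mp hinj'
    refine ⟨(LinearEquiv.ofBijective ((fderiv ℝ g x) : EuclideanSpace ℝ (Fin n) →ₗ[ℝ] EuclideanSpace ℝ (Fin n))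
      ⟨hinj', hsurj'⟩).toContinuousLinearEquiv, ?_⟩
    ext v; rfl
  -- Step 4 : surjectivity of g onto all of E
  have hsurjg : ∀ y : EuclideanSpace ℝ (Fin n), ∃ x ∈ B, g x = y := by
    have hopen : IsOpen (g '' B) := by
      rw [isOpen_iff_mem_nhds]
      rintro y ⟨x, hx, rfl⟩
      obtain ⟨A, hAeq⟩ := hA x hx
      have hcd : ContDiffAt ℝ (⊤ : ℕ∞) g x := hgs.contDiffAt (hBo.mem_nhds hx)
      have hF : HasFDerivAt g (A : EuclideanSpace ℝ (Fin n) →L[ℝ] EuclideanSpace ℝ (Fin n)) x := by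
        rw [hAeq]; exact (hgd x hx).hasFDerivAt
      have hst : HasStrictFDerivAt g (A : EuclideanSpace ℝ (Fin n) →L[ℝ] EuclideanSpace ℝ (Fin n)) x :=
        hcd.hasStrictFDerivAt' hF (by simp)
      rw [← hst.map_nhds_eq_of_equiv]
      exact image_mem_map (hBo.mem_nhds hx)
    have hclosed : IsClosed (g '' B) := by
      apply IsSeqClosed.isClosed
      intro u y hu hlim
      choose w hwB hwg using fun k => hu k
      obtain ⟨x₀, hx₀cb, ψ, hψmono, hψlim⟩ :=
        (isCompact_closedBall (0:EuclideanSpace ℝ (Fin n)) a).tendsto_subseq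
          (fun k => ball_subset_closedBall (hwB k))
      have hx₀norm : ‖x₀‖ ≤ a := by simpa [dist_eq_norm] using hx₀cb
      rcases lt_or_eq_of_le hx₀norm with hlt | heq
      · have hx₀B : x₀ ∈ B := by simpa [hBdef, dist_eq_norm] using hlt
        have hcont : ContinuousAt g x₀ :=
          (hgs.continuousOn.continuousAt (hBo.mem_nhds hx₀B))
        have h1 : Tendsto (fun k => g (w (ψ k))) atTop (𝓝 (g x₀)) :=
          hcont.tendsto.comp hψlim
        have h2 : Tendsto (fun k => g (w (ψ k))) atTop (𝓝 y) := by
          have := hlim.comp hψmono.tendsto_atTop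
          simpa [Function.comp_def, hwg] using this
        exact ⟨x₀, hx₀B, tendsto_nhds_unique h1 h2⟩
      · exfalso
        have hnorm : Tendsto (fun k => ‖w (ψ k)‖) atTop (𝓝 a) := by
          have := (continuous_norm.tendsto x₀).comp hψlim
          rw [← heq]
          simpa [Function.comp_def] using this
        have hb := hblow (fun k => w (ψ k)) (fun k => hwB (ψ k)) hnorm
        have h2 : Tendsto (fun k => g (w (ψ k))) atTop (𝓝 y) := by
          have := hlim.comp hψmono.tendsto_atTop
          simpa [Function.comp_def, hwg] using this
        have h3 : Tendsto (fun k => ‖g (w (ψ k))‖) atTop (𝓝 ‖y‖) :=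
          (continuous_norm.tendsto y).comp h2
        exact not_tendsto_atTop_of_tendsto_nhds h3 hb
    have hne : (g '' B).Nonempty := ⟨g 0, 0, by simp [hBdef, ha], rfl⟩
    have huniv : g '' B = univ := IsClopen.eq_univ ⟨hclosed, hopen⟩ hne
    intro y
    have : y ∈ g '' B := huniv ▸ mem_univ y
    obtain ⟨x, hx, hxy⟩ := this
    exact ⟨x, hx, hxy⟩
  choose ψ hψB hψg using hsurjg
  -- Step 5 : smoothness of the inverse ψ
  have hψsmooth : ContDiff ℝ (⊤ : ℕ∞) ψ := by
    rw [contDiff_iff_contDiffAt]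
    intro y
    set x₀ : EuclideanSpace ℝ (Fin n) := ψ y with hx₀def
    have hx₀B : x₀ ∈ B := hψB y
    obtain ⟨A, hAeq⟩ := hA x₀ hx₀B
    have hcd : ContDiffAt ℝ (⊤ : ℕ∞) g x₀ := hgs.contDiffAt (hBo.mem_nhds hx₀B)
    have hF : HasFDerivAt g (A : EuclideanSpace ℝ (Fin n) →L[ℝ] EuclideanSpace ℝ (Fin n)) x₀ := by
      rw [hAeq]; exact (hgd x₀ hx₀B).hasFDerivAt
    set li : EuclideanSpace ℝ (Fin n) → EuclideanSpace ℝ (Fin n) := hcd.localInverse hF (by simp) with hlidef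
    have hli : ContDiffAt ℝ (⊤ : ℕ∞) li (g x₀) := hcd.to_localInverse hF (by simp)
    have hlieq : li (g x₀) = x₀ := hcd.localInverse_apply_image hF (by simp)
    have h1 : ∀ᶠ z in 𝓝 (g x₀), g (li z) = z :=
      (hcd.hasStrictFDerivAt' hF (by simp)).eventually_right_inverse
    have h2 : ∀ᶠ z in 𝓝 (g x₀), li z ∈ B := by
      have hc : ContinuousAt li (g x₀) := hli.continuousAt
      have : B ∈ 𝓝 (li (g x₀)) := by rw [hlieq]; exact hBo.mem_nhds hx₀B
      exact hc.eventually_mem this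
    have hev : ψ =ᶠ[𝓝 (g x₀)] li := by
      filter_upwards [h1, h2] with z hz1 hz2
      refine hinj (hψB z) hz2 ?_
      rw [hψg z, hz1]
    have : ContDiffAt ℝ (⊤ : ℕ∞) ψ (g x₀) := hli.congr_of_eventuallyEq hev
    rwa [hψg y] at this
  -- Assembly
  refine ⟨fun q => (ψ q.1, q.2), ?_, ?_, ?_, ?_⟩
  · exact ContDiffOn.prodMk (hgs.comp contDiffOn_fst (fun p (hp : p ∈ B ×ˢ (univ : Set (EuclideanSpace ℝ (Fin n)))) => hp.1)) contDiffOn_snd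
  · exact (hψsmooth.comp contDiff_fst).prodMk contDiff_snd
  · rintro ⟨x, y⟩ ⟨hx, -⟩
    have : ψ (g x) = x := hinj (hψB (g x)) hx (hψg (g x))
    simp [this]
  · intro q
    exact ⟨⟨hψB q.1, mem_univ _⟩, by simp [hψg]⟩
end

section
/- Let n ≥ 1, let a > 0, let D_a ⊂ ℝ^n be the open ball of radius a centered at the origin, and let f : D_a → ℝ be a smooth function whose Hessian is positive definite at every point and whose gradient satisfies ‖∇f(x)‖ → ∞ as ‖x‖ → a. Then the gradient map ∇f : D_a → ℝ^n is a smooth diffeomorphism of D_a onto all of ℝ^n. -/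
open Metric Set Filter RealInnerProductSpace
open scoped Topology

section Aux

variable {n : ℕ}

private lemma aux_grad_smooth {f : EuclideanSpace ℝ (Fin n) → ℝ} {s : Set (EuclideanSpace ℝ (Fin n))}
    (hs : IsOpen s) (hf : ContDiffOn ℝ (⊤ : ℕ∞) f s) :
    ContDiffOn ℝ (⊤ : ℕ∞) (gradient f) s := by
  have hfd : ContDiffOn ℝ (⊤ : ℕ∞) (fderiv ℝ f) s := hf.fderiv_of_isOpen hs (by simp)
  have hg_eq : gradient f = (⇑(InnerProductSpace.toDual ℝ (EuclideanSpace ℝ (Fin n))).symm) ∘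
      (fderiv ℝ f) := rfl
  rw [hg_eq]
  exact (LinearIsometryEquiv.contDiff _).comp_contDiffOn hfd

private lemma aux_equiv {g : EuclideanSpace ℝ (Fin n) → EuclideanSpace ℝ (Fin n)}
    {x : EuclideanSpace ℝ (Fin n)}
    (hinj : Function.Injective (fderiv ℝ g x)) :
    ∃ D : EuclideanSpace ℝ (Fin n) ≃L[ℝ] EuclideanSpace ℝ (Fin n),
      (D : EuclideanSpace ℝ (Fin n) →L[ℝ] EuclideanSpace ℝ (Fin n)) = fderiv ℝ g x := by
  have hbij : Function.Bijective ((fderiv ℝ g x : EuclideanSpace ℝ (Fin n) →ₗ[ℝ]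
      EuclideanSpace ℝ (Fin n))) := ⟨hinj, (LinearMap.injective_iff_surjective).1 hinj⟩
  refine ⟨(LinearEquiv.ofBijective _ hbij).toContinuousLinearEquiv, ?_⟩
  ext v
  rfl

private lemma aux_mono {g : EuclideanSpace ℝ (Fin n) → EuclideanSpace ℝ (Fin n)}
    {s : Set (EuclideanSpace ℝ (Fin n))} (hconv : Convex ℝ s)
    (hg : ∀ x ∈ s, HasFDerivAt g (fderiv ℝ g x) x)
    (hpos : ∀ x ∈ s, ∀ v : EuclideanSpace ℝ (Fin n), v ≠ 0 → 0 < ⟪fderiv ℝ g x v, v⟫)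
    {x y : EuclideanSpace ℝ (Fin n)} (hx : x ∈ s) (hy : y ∈ s) (hne : x ≠ y) :
    0 < ⟪g x - g y, x - y⟫ := by
  set c : ℝ → EuclideanSpace ℝ (Fin n) := fun t => y + t • (x - y) with hc
  have hcB : ∀ t ∈ Icc (0:ℝ) 1, c t ∈ s := fun t ht => hconv.add_smul_sub_mem hy hx ht
  set φ : ℝ → ℝ := fun t => ⟪g (c t), x - y⟫ with hφ
  have hder : ∀ t ∈ Icc (0:ℝ) 1,
      HasDerivAt φ ⟪fderiv ℝ g (c t) (x - y), x - y⟫ t := by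
    intro t ht
    have hct : HasDerivAt c (x - y) t := by
      simpa only [one_smul, id] using ((hasDerivAt_id t).smul_const (x - y)).const_add y
    have h2 : HasDerivAt (fun u => g (c u)) (fderiv ℝ g (c t) (x - y)) t :=
      (hg _ (hcB t ht)).comp_hasDerivAt t hct
    have h3 := h2.inner ℝ (hasDerivAt_const t (x - y))
    simpa using h3
  have hmonoφ : StrictMonoOn φ (Icc (0:ℝ) 1) := by
    apply strictMonoOn_of_deriv_pos (convex_Icc 0 1)
    · intro t ht
      exact (hder t ht).continuousAt.continuousWithinAt
    · intro t ht
      rw [interior_Icc] at ht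
      rw [(hder t (Ioo_subset_Icc_self ht)).deriv]
      exact hpos (c t) (hcB t (Ioo_subset_Icc_self ht)) (x - y) (sub_ne_zero.2 hne)
  have hlt : φ 0 < φ 1 := hmonoφ (by simp) (by simp) zero_lt_one
  have hc1 : c 1 = x := by simp [hc]
  have hc0 : c 0 = y := by simp [hc]
  rw [hφ] at hlt
  simp only [hc0, hc1] at hlt
  rw [inner_sub_left]
  exact sub_pos.2 hlt

private lemma aux_closed {a : ℝ} {f : EuclideanSpace ℝ (Fin n) → ℝ}
    (hgc : ∀ x ∈ ball (0 : EuclideanSpace ℝ (Fin n)) a, ContinuousAt (gradient f) x)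
    (hblow : ∀ x : ℕ → EuclideanSpace ℝ (Fin n),
      (∀ k, x k ∈ ball (0 : EuclideanSpace ℝ (Fin n)) a) →
      Tendsto (fun k => ‖x k‖) atTop (𝓝 a) →
      Tendsto (fun k => ‖gradient f (x k)‖) atTop atTop) :
    IsClosed (gradient f '' ball (0 : EuclideanSpace ℝ (Fin n)) a) := by
  apply IsSeqClosed.isClosed
  intro y q hyS hyq
  choose x hxB hgx using hyS
  have hxball : ∀ k, x k ∈ closedBall (0 : EuclideanSpace ℝ (Fin n)) a := fun k =>
    ball_subset_closedBall (hxB k)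
  obtain ⟨z, hz, ψ, hψmono, hψtend⟩ :=
    (isCompact_closedBall (0 : EuclideanSpace ℝ (Fin n)) a).tendsto_subseq hxball
  rcases eq_or_lt_of_le (mem_closedBall_zero_iff.1 hz) with hza | hza
  · exfalso
    have hnorm : Tendsto (fun k => ‖x (ψ k)‖) atTop (𝓝 a) := by
      have h := (continuous_norm.tendsto z).comp hψtend
      rw [hza] at h
      exact h
    have hb := hblow (x ∘ ψ) (fun k => hxB (ψ k)) hnorm
    have hq : Tendsto (fun k => ‖gradient f ((x ∘ ψ) k)‖) atTop (𝓝 ‖q‖) := by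
      have h1 : Tendsto (fun k => y (ψ k)) atTop (𝓝 q) := hyq.comp hψmono.tendsto_atTop
      have h2 := (continuous_norm.tendsto q).comp h1
      simpa [Function.comp_def, hgx] using h2
    exact not_tendsto_atTop_of_tendsto_nhds hq hb
  · have hzB : z ∈ ball (0 : EuclideanSpace ℝ (Fin n)) a := mem_ball_zero_iff.2 hza
    have h1 : Tendsto (fun k => gradient f (x (ψ k))) atTop (𝓝 (gradient f z)) :=
      ((hgc z hzB).tendsto).comp hψtend
    have h2 : Tendsto (fun k => gradient f (x (ψ k))) atTop (𝓝 q) := by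
      simpa [Function.comp_def, hgx] using hyq.comp hψmono.tendsto_atTop
    exact ⟨z, hzB, tendsto_nhds_unique h1 h2⟩

private lemma aux_psi_smooth {g Ψ : EuclideanSpace ℝ (Fin n) → EuclideanSpace ℝ (Fin n)}
    {s : Set (EuclideanSpace ℝ (Fin n))} (hso : IsOpen s)
    (hg_at : ∀ x ∈ s, ContDiffAt ℝ (⊤ : ℕ∞) g x)
    (hDinj : ∀ x ∈ s, Function.Injective (fderiv ℝ g x))
    (hinjB : ∀ x ∈ s, ∀ y ∈ s, g x = g y → x = y)
    (hΨB : ∀ q, Ψ q ∈ s) (hΨg : ∀ q, g (Ψ q) = q) :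
    ContDiff ℝ (⊤ : ℕ∞) Ψ := by
  rw [contDiff_iff_contDiffAt]
  intro q
  have hx0B : Ψ q ∈ s := hΨB q
  have hgx0 : g (Ψ q) = q := hΨg q
  obtain ⟨D, hD⟩ := aux_equiv (hDinj (Ψ q) hx0B)
  have hca := hg_at (Ψ q) hx0B
  have hf' : HasFDerivAt g (D : EuclideanSpace ℝ (Fin n) →L[ℝ]
      EuclideanSpace ℝ (Fin n)) (Ψ q) := by
    rw [hD]; exact (hca.differentiableAt (by simp)).hasFDerivAt
  have hsd : HasStrictFDerivAt g (D : EuclideanSpace ℝ (Fin n) →L[ℝ]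
      EuclideanSpace ℝ (Fin n)) (Ψ q) := hca.hasStrictFDerivAt' hf' (by simp)
  have hsmooth : ContDiffAt ℝ (⊤ : ℕ∞) (hsd.localInverse g D (Ψ q)) (g (Ψ q)) :=
    hca.to_localInverse hf' (by simp)
  have hev1 : ∀ᶠ y in 𝓝 (g (Ψ q)), g (hsd.localInverse g D (Ψ q) y) = y :=
    hsd.eventually_right_inverse
  have hev2 : ∀ᶠ y in 𝓝 (g (Ψ q)), hsd.localInverse g D (Ψ q) y ∈ s := by
    have hc := hsd.localInverse_continuousAt
    rw [ContinuousAt, hsd.localInverse_apply_image] at hc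
    exact hc (hso.mem_nhds hx0B)
  have hevΨ : Ψ =ᶠ[𝓝 (g (Ψ q))] hsd.localInverse g D (Ψ q) := by
    filter_upwards [hev1, hev2] with y h1 h2
    exact hinjB (Ψ y) (hΨB y) _ h2 (by rw [hΨg y, h1])
  have hfinal : ContDiffAt ℝ (⊤ : ℕ∞) Ψ (g (Ψ q)) := hsmooth.congr_of_eventuallyEq hevΨ
  rwa [hgx0] at hfinal

end Aux

/-- If `f` is smooth on the open ball `D_a ⊆ ℝⁿ` with everywhere positive
definite Hessian and gradient blowing up at the boundary, then the gradient map
`∇f : D_a → ℝⁿ` is a smooth diffeomorphism of `D_a` onto all of `ℝⁿ`. -/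
theorem gradient_map_is_diffeomorphism_onto
    (n : ℕ) (hn : 1 ≤ n) (a : ℝ) (ha : 0 < a)
    (f : EuclideanSpace ℝ (Fin n) → ℝ)
    (hf : ContDiffOn ℝ (⊤ : ℕ∞) f (ball (0 : EuclideanSpace ℝ (Fin n)) a))
    (hpos : ∀ x ∈ ball (0 : EuclideanSpace ℝ (Fin n)) a,
      ∀ v : EuclideanSpace ℝ (Fin n), v ≠ 0 →
        0 < ⟪fderiv ℝ (gradient f) x v, v⟫)
    (hblow : ∀ x : ℕ → EuclideanSpace ℝ (Fin n),
      (∀ k, x k ∈ ball (0 : EuclideanSpace ℝ (Fin n)) a) →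
      Tendsto (fun k => ‖x k‖) atTop (𝓝 a) →
      Tendsto (fun k => ‖gradient f (x k)‖) atTop atTop) :
    ∃ Ψ : EuclideanSpace ℝ (Fin n) → EuclideanSpace ℝ (Fin n),
      ContDiffOn ℝ (⊤ : ℕ∞) (gradient f) (ball (0 : EuclideanSpace ℝ (Fin n)) a) ∧
      ContDiff ℝ (⊤ : ℕ∞) Ψ ∧
      (∀ x ∈ ball (0 : EuclideanSpace ℝ (Fin n)) a, Ψ (gradient f x) = x) ∧
      (∀ q : EuclideanSpace ℝ (Fin n),
        Ψ q ∈ ball (0 : EuclideanSpace ℝ (Fin n)) a ∧ gradient f (Ψ q) = q) := by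
  classical
  set B : Set (EuclideanSpace ℝ (Fin n)) := ball (0 : EuclideanSpace ℝ (Fin n)) a with hBdef
  set g : EuclideanSpace ℝ (Fin n) → EuclideanSpace ℝ (Fin n) := gradient f with hgdef
  have hBo : IsOpen B := isOpen_ball
  have hconv : Convex ℝ B := convex_ball 0 a
  have hgsm : ContDiffOn ℝ (⊤ : ℕ∞) g B := aux_grad_smooth hBo hf
  have hg_at : ∀ x ∈ B, ContDiffAt ℝ (⊤ : ℕ∞) g x := fun x hx =>
    hgsm.contDiffAt (hBo.mem_nhds hx)
  have hg_fd : ∀ x ∈ B, HasFDerivAt g (fderiv ℝ g x) x := fun x hx =>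
    ((hg_at x hx).differentiableAt (by simp)).hasFDerivAt
  have hDinj : ∀ x ∈ B, Function.Injective (fderiv ℝ g x) := by
    intro x hx v w hvw
    by_contra hne
    have h1 := hpos x hx (v - w) (sub_ne_zero.2 hne)
    rw [map_sub, hvw, sub_self] at h1
    simp at h1
  have hinjB : ∀ x ∈ B, ∀ y ∈ B, g x = g y → x = y := by
    intro x hx y hy hxy
    by_contra hne
    have h := aux_mono hconv hg_fd hpos hx hy hne
    rw [hxy, sub_self] at h
    simp at h
  -- the image of B under g is open
  have hopen : IsOpen (g '' B) := by
    rw [isOpen_iff_mem_nhds]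
    rintro q ⟨x, hx, rfl⟩
    obtain ⟨D, hD⟩ := aux_equiv (hDinj x hx)
    have hsd : HasStrictFDerivAt g (D : EuclideanSpace ℝ (Fin n) →L[ℝ]
        EuclideanSpace ℝ (Fin n)) x := by
      rw [hD]
      exact (hg_at x hx).hasStrictFDerivAt (by simp)
    have hmap := hsd.map_nhds_eq_of_equiv
    rw [← hmap]
    exact image_mem_map (hBo.mem_nhds hx)
  have hclosed : IsClosed (g '' B) :=
    aux_closed (fun x hx => (hg_at x hx).continuousAt) hblow
  have huniv : g '' B = univ :=
    IsClopen.eq_univ ⟨hclosed, hopen⟩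
      ⟨g 0, mem_image_of_mem g (mem_ball_self ha)⟩
  have hsurj : ∀ q : EuclideanSpace ℝ (Fin n), ∃ x, x ∈ B ∧ g x = q := by
    intro q
    have hq : q ∈ g '' B := huniv ▸ mem_univ q
    obtain ⟨x, hx, hgx⟩ := hq
    exact ⟨x, hx, hgx⟩
  choose Ψ hΨB hΨg using hsurj
  refine ⟨Ψ, hgsm, ?_, ?_, fun q => ⟨hΨB q, hΨg q⟩⟩
  · exact aux_psi_smooth hBo hg_at hDinj hinjB hΨB hΨg
  · intro x hx
    exact hinjB (Ψ (g x)) (hΨB (g x)) x hx (by rw [hΨg])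
end

section
/- Let X be a nonempty Hausdorff topological space and let F : X → ℝ^m be a continuous proper map that is a local homeomorphism (every point of X has an open neighborhood mapped homeomorphically by F onto an open subset of ℝ^m). Then F is a surjective covering map; moreover, if in addition X is connected, then F is a homeomorphism of X onto ℝ^m. -/
open Function Set

section

variable {E X : Type*} [TopologicalSpace E] [TopologicalSpace X] {p : E → X}

theorem IsLocalHomeomorph.finite_preimage_singleton (hp : IsLocalHomeomorph p) {x : X}
    (hx : IsCompact (p ⁻¹' {x})) : (p ⁻¹' {x}).Finite :=
  hx.finite <| .of_openPartialHomeomorph p subset_rfl fun e _ ↦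
    (hp e).imp fun _ h ↦ ⟨h.1, h.2.symm⟩

theorem IsProperMap.isCoveringMap_of_isLocalHomeomorph [T2Space E] (hp : IsProperMap p)
    (hloc : IsLocalHomeomorph p) : IsCoveringMap p := by
  rw [isCoveringMap_iff_isCoveringMapOn_univ]
  refine hp.isClosedMap.isCoveringMapOn_of_isLocalHomeomorphOn
    (fun x _ ↦ hloc.finite_preimage_singleton (hp.isCompact_preimage isCompact_singleton)) ?_
  rwa [preimage_univ, ← isLocalHomeomorph_iff_isLocalHomeomorphOn_univ]

theorem IsClosedMap.surjective_of_isOpenMap [Nonempty E] [PreconnectedSpace X]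
    (hc : IsClosedMap p) (ho : IsOpenMap p) : Surjective p :=
  range_eq_univ.mp (IsClopen.eq_univ ⟨hc.isClosed_range, ho.isOpen_range⟩ (range_nonempty p))

/-- The lift of `id` through `p` is an inverse of `p`, by uniqueness of lifts from the
connected space `E`. -/
theorem IsCoveringMap.exists_homeomorph_eq [ConnectedSpace E] [SimplyConnectedSpace X]
    [LocallyPathConnectedSpace X] (hp : IsCoveringMap p) : ∃ e : E ≃ₜ X, ⇑e = p := by
  obtain ⟨e₀⟩ := ‹ConnectedSpace E›.toNonempty
  obtain ⟨s, ⟨hs₀, hps⟩, -⟩ :=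
    hp.existsUnique_continuousMap_lifts (ContinuousMap.id X) (p e₀) e₀ rfl
  have hsp : s ∘ p = id :=
    hp.eq_of_comp_eq (s.continuous.comp hp.continuous) continuous_id
      (by rw [← comp_assoc, hps]; rfl) e₀ hs₀
  exact ⟨{ toFun := p, invFun := s, left_inv := congrFun hsp, right_inv := congrFun hps
           continuous_toFun := hp.continuous, continuous_invFun := s.continuous }, rfl⟩

end

/-- A continuous proper local homeomorphism `F` from a nonempty Hausdorff
space `X` to `ℝᵐ` is a surjective covering map; if moreover `X` is connected, `F` is a
homeomorphism of `X` onto `ℝᵐ`. -/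
theorem proper_local_homeo_to_euclidean_is_covering_and_homeo
    (m : ℕ) (X : Type*) [TopologicalSpace X] [Nonempty X] [T2Space X]
    (F : X → EuclideanSpace ℝ (Fin m))
    (hFcont : Continuous F)
    (hFproper : ∀ K : Set (EuclideanSpace ℝ (Fin m)), IsCompact K → IsCompact (F ⁻¹' K))
    (hFloc : IsLocalHomeomorph F) :
    IsCoveringMap F ∧ Surjective F ∧
      (ConnectedSpace X → ∃ e : X ≃ₜ EuclideanSpace ℝ (Fin m), ⇑e = F) := by
  have hproper : IsProperMap F :=
    isProperMap_iff_isCompact_preimage.mpr ⟨hFcont, fun K hK ↦ hFproper K hK⟩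
  have hcov : IsCoveringMap F := hproper.isCoveringMap_of_isLocalHomeomorph hFloc
  exact ⟨hcov, hproper.isClosedMap.surjective_of_isOpenMap hFloc.isOpenMap,
    fun _ ↦ hcov.exists_homeomorph_eq⟩
end

section
/- Let n ≥ 2, let a > 0, and let Y : [0,a) → ℝ be a C² function satisfying the ordinary differential equation (Y'(r)/r)^{n−1} · Y''(r) = e^{Y(r)} for all r ∈ (0,a), with initial conditions Y'(0) = 0 and Y''(0) = e^{Y(0)/n}. Then Y'(r) > 0 and Y''(r) > 0 for all r ∈ (0,a); in particular Y' is strictly increasing on [0,a). -/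
open Metric Set Filter
open scoped Topology

/-!
The right-hand side `exp (Y r)` of the ODE never vanishes, so neither does `Y''` on `(0, a)`;
since `Y'' 0 = exp (Y 0 / n) > 0` as well, continuity of `Y''` on the connected set `[0, a)`
forces `Y'' > 0` there. Hence `Y'` is strictly increasing on `[0, a)` and `Y' r > Y' 0 = 0`.
-/

theorem IsPreconnected.pos_of_ne_zero {X α : Type*} [TopologicalSpace X] [LinearOrder α]
    [TopologicalSpace α] [OrderClosedTopology α] [Zero α] {s : Set X} (hs : IsPreconnected s)
    {f : X → α} (hf : ContinuousOn f s) (hf₀ : ∀ x ∈ s, f x ≠ 0) {x₀ : X} (hx₀ : x₀ ∈ s)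
    (hpos : 0 < f x₀) {x : X} (hx : x ∈ s) : 0 < f x := by
  by_contra! hle
  obtain ⟨c, hc, hfc⟩ := hs.intermediate_value hx hx₀ hf ⟨hle, hpos.le⟩
  exact hf₀ c hc hfc

theorem strictMonoOn_of_forall_hasDerivWithinAt_pos {D : Set ℝ} (hD : Convex ℝ D)
    {f f' : ℝ → ℝ} (hf : ∀ x ∈ D, HasDerivWithinAt f (f' x) D x)
    (hf' : ∀ x ∈ interior D, 0 < f' x) : StrictMonoOn f D :=
  strictMonoOn_of_hasDerivWithinAt_pos hD (fun x hx ↦ (hf x hx).continuousWithinAt)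
    (fun x hx ↦ (hf x (interior_subset hx)).mono interior_subset) hf'

theorem calabi_ode_first_and_second_derivatives_positive_general
    (n : ℕ) (a : ℝ)
    (Y Y' Y'' : ℝ → ℝ)
    (hY' : ∀ r ∈ Ico (0 : ℝ) a, HasDerivWithinAt Y' (Y'' r) (Ico (0 : ℝ) a) r)
    (hY''cont : ContinuousOn Y'' (Ico (0 : ℝ) a))
    (hode : ∀ r ∈ Ioo (0 : ℝ) a, (Y' r / r) ^ (n - 1) * Y'' r = Real.exp (Y r))
    (hY'0 : Y' 0 = 0) (hY''0 : Y'' 0 = Real.exp (Y 0 / (n : ℝ))) :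
    (∀ r ∈ Ioo (0 : ℝ) a, 0 < Y' r ∧ 0 < Y'' r) ∧ StrictMonoOn Y' (Ico (0 : ℝ) a) := by
  have hY''ne : ∀ r ∈ Ico (0 : ℝ) a, Y'' r ≠ 0 := by
    rintro r ⟨hr₀, hra⟩ hr
    rcases hr₀.eq_or_lt with rfl | hr₀
    · exact (Real.exp_pos _).ne' (hY''0 ▸ hr)
    · exact (Real.exp_pos (Y r)).ne' (by rw [← hode r ⟨hr₀, hra⟩, hr, mul_zero])
  have hY''pos : ∀ r ∈ Ico (0 : ℝ) a, 0 < Y'' r := fun r hr ↦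
    (convex_Ico 0 a).isPreconnected.pos_of_ne_zero hY''cont hY''ne
      ⟨le_rfl, hr.1.trans_lt hr.2⟩ (hY''0 ▸ Real.exp_pos _) hr
  have hmono : StrictMonoOn Y' (Ico (0 : ℝ) a) :=
    strictMonoOn_of_forall_hasDerivWithinAt_pos (convex_Ico 0 a) hY' fun r hr ↦
      hY''pos r (interior_subset hr)
  refine ⟨fun r hr ↦ ⟨?_, hY''pos r (Ioo_subset_Ico_self hr)⟩, hmono⟩
  simpa [hY'0] using hmono ⟨le_rfl, hr.1.trans hr.2⟩ (Ioo_subset_Ico_self hr) hr.1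

/-- If `Y : [0, a) → ℝ` is `C²` and satisfies Calabi's radial ODE
`(Y'(r)/r)^(n−1) · Y''(r) = exp (Y r)` on `(0, a)` with initial conditions `Y'(0) = 0`
and `Y''(0) = exp (Y 0 / n)`, then `Y' > 0` and `Y'' > 0` on `(0, a)`; in particular
`Y'` is strictly increasing on `[0, a)`. -/
theorem calabi_ode_first_and_second_derivatives_positive
    (n : ℕ) (hn : 2 ≤ n) (a : ℝ) (ha : 0 < a)
    (Y Y' Y'' : ℝ → ℝ)
    (hY : ∀ r ∈ Ico (0 : ℝ) a, HasDerivWithinAt Y (Y' r) (Ico (0 : ℝ) a) r)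
    (hY' : ∀ r ∈ Ico (0 : ℝ) a, HasDerivWithinAt Y' (Y'' r) (Ico (0 : ℝ) a) r)
    (hY''cont : ContinuousOn Y'' (Ico (0 : ℝ) a))
    (hode : ∀ r ∈ Ioo (0 : ℝ) a, (Y' r / r) ^ (n - 1) * Y'' r = Real.exp (Y r))
    (hY'0 : Y' 0 = 0) (hY''0 : Y'' 0 = Real.exp (Y 0 / (n : ℝ))) :
    (∀ r ∈ Ioo (0 : ℝ) a, 0 < Y' r ∧ 0 < Y'' r) ∧ StrictMonoOn Y' (Ico (0 : ℝ) a) :=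
  calabi_ode_first_and_second_derivatives_positive_general n a Y Y' Y'' hY' hY''cont hode hY'0 hY''0
end
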